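/- arXiv:2303.12785 — 5 statements merged into one kernel-verified Lean document; each statement's English description precedes it below -/
import Mathlib

section
/- Exact gradient-pairing identity (first-order dynamics of log π under policy gradient): for the softmax policy π_θ with linear preferences over a finite action set A with kernel Θ(a,a') := ⟨ψ(a), ψ(a')⟩, for every a ∈ A and θ ∈ ℝ^P, ⟨∇_θ J(θ), ∇_θ log π_θ(a)⟩ = −(1/τ) Σ_{a'∈A} π_θ(a') ( log(π_θ(a')/π*(a')) − D_KL(π_θ‖π*) ) ( Θ(a,a') − Σ_{a''∈A} π_θ(a'') Θ(a'',a') ). -/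
/-!
Write `π_θ = gibbs π̄ (h_θ / τ)` and `π* = gibbs π̄ (r / τ)`. The Gibbs variational identity
turns the objective into `J(θ) = τ log Z* - τ KL(π_θ ‖ π*)`. For a Gibbs distribution with
logits `ℓ`, `d log π_b = dℓ_b - Σ_c π_c dℓ_c`, and since the centring can be moved from the
logits to the log-ratios, `d KL(π ‖ q) = Σ_b π_b (log (π_b / q_b) - KL(π ‖ q)) dℓ_b`.
With `dℓ_b = ⟪·, ψ_b⟫ / τ` and `∇ log π_θ(a) = (ψ_a - Σ_c π_c ψ_c) / τ`, pairing the two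
gradients gives the kernel sum.
-/

open scoped RealInnerProductSpace
open Finset

noncomputable def logPartition {A : Type*} [Fintype A] (w x : A → ℝ) : ℝ :=
  Real.log (∑ c, w c * Real.exp (x c))

noncomputable def gibbs {A : Type*} [Fintype A] (w x : A → ℝ) (b : A) : ℝ :=
  w b * Real.exp (x b) / ∑ c, w c * Real.exp (x c)

noncomputable def relEntropy {A : Type*} [Fintype A] (p q : A → ℝ) : ℝ :=
  ∑ b, p b * Real.log (p b / q b)

section Gibbs

variable {A : Type*} [Fintype A] [Nonempty A] {w : A → ℝ}

lemma sum_mul_exp_pos (hw : ∀ b, 0 < w b) (x : A → ℝ) : 0 < ∑ c, w c * Real.exp (x c) :=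
  sum_pos (fun c _ => mul_pos (hw c) (Real.exp_pos _)) univ_nonempty

lemma gibbs_pos (hw : ∀ b, 0 < w b) (x : A → ℝ) (b : A) : 0 < gibbs w x b :=
  div_pos (mul_pos (hw b) (Real.exp_pos _)) (sum_mul_exp_pos hw x)

lemma sum_gibbs (hw : ∀ b, 0 < w b) (x : A → ℝ) : ∑ b, gibbs w x b = 1 := by
  simp only [gibbs, ← sum_div]
  exact div_self (sum_mul_exp_pos hw x).ne'

lemma log_gibbs (hw : ∀ b, 0 < w b) (x : A → ℝ) (b : A) :
    Real.log (gibbs w x b) = Real.log (w b) + x b - logPartition w x := by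
  rw [gibbs, logPartition, Real.log_div (mul_pos (hw b) (Real.exp_pos _)).ne'
    (sum_mul_exp_pos hw x).ne', Real.log_mul (hw b).ne' (Real.exp_pos _).ne', Real.log_exp]

omit [Nonempty A] in
lemma sum_smul_sub_mean_eq_sum_sub_mean_smul {M : Type*} [AddCommGroup M] [Module ℝ M]
    (p f : A → ℝ) (u : A → M) :
    ∑ b, (p b * f b) • (u b - ∑ c, p c • u c)
      = ∑ b, (p b * (f b - ∑ c, p c * f c)) • u b := by
  simp only [smul_sub, mul_sub, sub_smul, sum_sub_distrib, ← sum_smul]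
  congr 1
  simp only [mul_comm (p _), mul_smul, ← smul_sum]

lemma sum_mul_sub_relEntropy_eq (hw : ∀ b, 0 < w b) {τ : ℝ} (hτ : τ ≠ 0) {p : A → ℝ}
    (hp : ∑ b, p b = 1) (r : A → ℝ) :
    ∑ b, p b * r b - τ * relEntropy p w
      = τ * logPartition w (fun b => r b / τ) - τ * relEntropy p (gibbs w fun b => r b / τ) := by
  have key : ∀ b, p b * Real.log (p b / w b)
      = p b * Real.log (p b / gibbs w (fun b => r b / τ) b)
        + p b * (r b / τ - logPartition w fun b => r b / τ) := by
    intro b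
    rcases eq_or_ne (p b) 0 with h | h
    · simp [h]
    rw [Real.log_div h (hw b).ne', Real.log_div h (gibbs_pos hw _ b).ne', log_gibbs hw]
    ring
  have mean : ∑ b, p b * (r b / τ - logPartition w fun b => r b / τ)
      = (∑ b, p b * r b) / τ - logPartition w fun b => r b / τ := by
    simp only [mul_sub, sum_sub_distrib, ← sum_mul, hp, one_mul, mul_div_assoc', sum_div]
  rw [relEntropy, relEntropy, sum_congr rfl fun b _ => key b, sum_add_distrib, mean]
  field_simp
  ring

variable {E : Type*} [NormedAddCommGroup E] [NormedSpace ℝ E] {ℓ : E → A → ℝ}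
  {L : A → E →L[ℝ] ℝ} {θ : E}

lemma hasFDerivAt_logPartition (hw : ∀ b, 0 < w b)
    (hℓ : ∀ b, HasFDerivAt (fun θ => ℓ θ b) (L b) θ) :
    HasFDerivAt (fun θ => logPartition w (ℓ θ)) (∑ c, gibbs w (ℓ θ) c • L c) θ := by
  have hZ := HasFDerivAt.fun_sum (u := univ) fun c _ => ((hℓ c).exp).const_mul (w c)
  refine (hZ.log (sum_mul_exp_pos hw _).ne').congr_fderiv ?_
  simp only [gibbs, smul_sum, smul_smul, div_eq_inv_mul]

lemma hasFDerivAt_log_gibbs (hw : ∀ b, 0 < w b)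
    (hℓ : ∀ b, HasFDerivAt (fun θ => ℓ θ b) (L b) θ) (b : A) :
    HasFDerivAt (fun θ => Real.log (gibbs w (ℓ θ) b)) (L b - ∑ c, gibbs w (ℓ θ) c • L c) θ := by
  simp only [log_gibbs hw]
  exact ((hℓ b).const_add _).sub (hasFDerivAt_logPartition hw hℓ)

lemma hasFDerivAt_gibbs (hw : ∀ b, 0 < w b)
    (hℓ : ∀ b, HasFDerivAt (fun θ => ℓ θ b) (L b) θ) (b : A) :
    HasFDerivAt (fun θ => gibbs w (ℓ θ) b)
      (gibbs w (ℓ θ) b • (L b - ∑ c, gibbs w (ℓ θ) c • L c)) θ := by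
  have h := (hasFDerivAt_log_gibbs hw hℓ b).exp
  simp only [Real.exp_log (gibbs_pos hw _ _)] at h
  exact h

lemma hasFDerivAt_relEntropy_gibbs (hw : ∀ b, 0 < w b)
    (hℓ : ∀ b, HasFDerivAt (fun θ => ℓ θ b) (L b) θ) {q : A → ℝ} (hq : ∀ b, 0 < q b) :
    HasFDerivAt (fun θ => relEntropy (gibbs w (ℓ θ)) q)
      (∑ b, (gibbs w (ℓ θ) b * (Real.log (gibbs w (ℓ θ) b / q b)
        - relEntropy (gibbs w (ℓ θ)) q)) • L b) θ := by
  have hterm : ∀ b, HasFDerivAt (fun θ => gibbs w (ℓ θ) b * Real.log (gibbs w (ℓ θ) b / q b))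
      ((gibbs w (ℓ θ) b * (1 + Real.log (gibbs w (ℓ θ) b / q b)))
        • (L b - ∑ c, gibbs w (ℓ θ) c • L c)) θ := by
    intro b
    have hlog : HasFDerivAt (fun θ => Real.log (gibbs w (ℓ θ) b / q b))
        (L b - ∑ c, gibbs w (ℓ θ) c • L c) θ := by
      simp only [Real.log_div (gibbs_pos hw _ b).ne' (hq b).ne']
      exact (hasFDerivAt_log_gibbs hw hℓ b).sub_const _
    refine ((hasFDerivAt_gibbs hw hℓ b).mul hlog).congr_fderiv ?_
    rw [smul_smul, ← add_smul]
    congr 1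
    ring
  refine (HasFDerivAt.fun_sum (u := univ) fun b _ => hterm b).congr_fderiv ?_
  rw [sum_smul_sub_mean_eq_sum_sub_mean_smul]
  refine sum_congr rfl fun b _ => ?_
  simp only [relEntropy, mul_one_add, sum_add_distrib, sum_gibbs hw]
  congr 1
  ring

end Gibbs

section LinearLogits

variable {A : Type*} [Fintype A] [Nonempty A] {w : A → ℝ}
  {F : Type*} [NormedAddCommGroup F] [InnerProductSpace ℝ F] [CompleteSpace F]

lemma hasFDerivAt_inner_div_const (v : F) (τ : ℝ) (θ : F) :
    HasFDerivAt (fun θ => ⟪θ, v⟫ / τ) (InnerProductSpace.toDual ℝ F (τ⁻¹ • v)) θ := by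
  convert (InnerProductSpace.toDual ℝ F (τ⁻¹ • v)).hasFDerivAt using 1
  funext θ
  rw [InnerProductSpace.toDual_apply_apply, real_inner_smul_left, real_inner_comm, div_eq_inv_mul]

lemma hasGradientAt_log_gibbs_inner (hw : ∀ b, 0 < w b) (ψ : A → F) (τ : ℝ) (θ : F) (a : A) :
    HasGradientAt (fun θ => Real.log (gibbs w (fun b => ⟪θ, ψ b⟫ / τ) a))
      (τ⁻¹ • (ψ a - ∑ c, gibbs w (fun b => ⟪θ, ψ b⟫ / τ) c • ψ c)) θ := by
  rw [hasGradientAt_iff_hasFDerivAt]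
  refine (hasFDerivAt_log_gibbs hw (fun b => hasFDerivAt_inner_div_const (ψ b) τ θ) a)
    |>.congr_fderiv ?_
  simp only [map_smul, map_sub, map_sum, smul_sub, smul_sum, smul_comm τ⁻¹]

end LinearLogits

theorem bandit_gradient_pairing_identity_general {A : Type*} [Fintype A] [Nonempty A]
    (τ : ℝ) (hτ : 0 < τ)
    (pibar : A → ℝ) (hpibar_pos : ∀ a, 0 < pibar a)
    (r : A → ℝ)
    (pistar : A → ℝ)
    (hpistar : ∀ a, pistar a =
      pibar a * Real.exp (r a / τ) / ∑ a', pibar a' * Real.exp (r a' / τ))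
    (P : ℕ) (ψ : A → EuclideanSpace ℝ (Fin P))
    (π : EuclideanSpace ℝ (Fin P) → A → ℝ)
    (hπ : ∀ θ a, π θ a =
      pibar a * Real.exp (⟪θ, ψ a⟫ / τ) / ∑ a', pibar a' * Real.exp (⟪θ, ψ a'⟫ / τ))
    (Θk : A → A → ℝ) (hΘk : ∀ a a', Θk a a' = ⟪ψ a, ψ a'⟫)
    (J : EuclideanSpace ℝ (Fin P) → ℝ)
    (hJ : ∀ θ, J θ = (∑ a, π θ a * r a) - τ * ∑ a, π θ a * Real.log (π θ a / pibar a))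
    (θ : EuclideanSpace ℝ (Fin P)) (a : A) :
    ⟪gradient J θ, gradient (fun θ' => Real.log (π θ' a)) θ⟫
      = -(1 / τ) * ∑ a', π θ a' *
          (Real.log (π θ a' / pistar a')
            - ∑ b, π θ b * Real.log (π θ b / pistar b)) *
          (Θk a a' - ∑ a'', π θ a'' * Θk a'' a') := by
  have hπ_gibbs : π = fun θ => gibbs pibar fun b => ⟪θ, ψ b⟫ / τ := funext₂ hπ
  have hpistar_gibbs : pistar = gibbs pibar fun b => r b / τ := funext hpistar
  have hJ_rel : J = fun θ =>
      τ * logPartition pibar (fun b => r b / τ) - τ * relEntropy (π θ) pistar := by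
    funext θ
    rw [hJ, hπ_gibbs, hpistar_gibbs]
    exact sum_mul_sub_relEntropy_eq hpibar_pos hτ.ne' (sum_gibbs hpibar_pos _) r
  subst hπ_gibbs hpistar_gibbs hJ_rel
  beta_reduce
  have hJ_deriv := ((hasFDerivAt_relEntropy_gibbs hpibar_pos
    (fun b => hasFDerivAt_inner_div_const (ψ b) τ θ)
    (gibbs_pos hpibar_pos (fun b => r b / τ))).const_mul τ).const_sub
    (τ * logPartition pibar (fun b => r b / τ))
  have hcentered : ∀ b, ⟪ψ b, ψ a - ∑ c, gibbs pibar (fun b => ⟪θ, ψ b⟫ / τ) c • ψ c⟫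
      = Θk a b - ∑ c, gibbs pibar (fun b => ⟪θ, ψ b⟫ / τ) c * Θk c b := by
    intro b
    simp only [inner_sub_right, inner_sum, real_inner_smul_right, hΘk, real_inner_comm (ψ b)]
  rw [(hasGradientAt_log_gibbs_inner hpibar_pos ψ τ θ a).gradient, inner_gradient_left,
    hJ_deriv.fderiv]
  simp only [neg_apply, smul_apply, _root_.sum_apply, InnerProductSpace.toDual_apply_apply,
    smul_eq_mul, real_inner_smul_left, real_inner_smul_right, hcentered, relEntropy]
  rw [← neg_mul, mul_sum, mul_sum]
  refine sum_congr rfl fun b _ => ?_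
  field_simp

/-- Exact gradient-pairing identity in the bandit case: for the
softmax policy with linear preferences and kernel `Θ(a,a') = ⟪ψ(a), ψ(a')⟫`,
`⟪∇_θ J(θ), ∇_θ log π_θ(a)⟫ = −(1/τ) Σ_{a'} π_θ(a')
(log(π_θ(a')/π*(a')) − D_KL(π_θ‖π*)) (Θ(a,a') − Σ_{a''} π_θ(a'') Θ(a'',a'))`. -/
theorem bandit_gradient_pairing_identity {A : Type*} [Fintype A] [Nonempty A]
    (τ : ℝ) (hτ : 0 < τ)
    (pibar : A → ℝ) (hpibar_pos : ∀ a, 0 < pibar a) (hpibar_sum : ∑ a, pibar a = 1)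
    (r : A → ℝ)
    (pistar : A → ℝ)
    (hpistar : ∀ a, pistar a =
      pibar a * Real.exp (r a / τ) / ∑ a', pibar a' * Real.exp (r a' / τ))
    (P : ℕ) (ψ : A → EuclideanSpace ℝ (Fin P))
    (π : EuclideanSpace ℝ (Fin P) → A → ℝ)
    (hπ : ∀ θ a, π θ a =
      pibar a * Real.exp (⟪θ, ψ a⟫ / τ) / ∑ a', pibar a' * Real.exp (⟪θ, ψ a'⟫ / τ))
    (Θk : A → A → ℝ) (hΘk : ∀ a a', Θk a a' = ⟪ψ a, ψ a'⟫)
    (J : EuclideanSpace ℝ (Fin P) → ℝ)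
    (hJ : ∀ θ, J θ = (∑ a, π θ a * r a) - τ * ∑ a, π θ a * Real.log (π θ a / pibar a))
    (θ : EuclideanSpace ℝ (Fin P)) (a : A) :
    ⟪gradient J θ, gradient (fun θ' => Real.log (π θ' a)) θ⟫
      = -(1 / τ) * ∑ a', π θ a' *
          (Real.log (π θ a' / pistar a')
            - ∑ b, π θ b * Real.log (π θ b / pistar b)) *
          (Θk a a' - ∑ a'', π θ a'' * Θk a'' a') :=
  bandit_gradient_pairing_identity_general τ hτ pibar hpibar_pos r pistar hpistar P ψ π hπ Θk hΘk J
    hJ θ a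
end

section
/- Log-partition expression of the optimal value function: for every state s ∈ S and every 1 ≤ i ≤ n, V*^{(i)}(s) = τ log ( Σ_{a∈A} π̄(a|s) exp( Q*^{(i)}(a,s)/τ ) ). -/
/-! At the softmax policy `π(a) = w(a) exp(q(a)/τ) / Z`, the log-ratio `τ log(π(a)/w(a))` equals
`q(a) - τ log Z` for every action, so each regularized reward `q(a) - τ log(π(a)/w(a))` is the
constant `τ log Z`, and averaging it over the probability vector `π` returns `τ log Z`. -/

open Finset Real

namespace EntropyRegularized

variable {A : Type*} [Fintype A]

noncomputable def partitionFunction (w q : A → ℝ) (τ : ℝ) : ℝ :=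
  ∑ a, w a * exp (q a / τ)

noncomputable def gibbsPolicy (w q : A → ℝ) (τ : ℝ) (a : A) : ℝ :=
  w a * exp (q a / τ) / partitionFunction w q τ

noncomputable def regularizedValue (w q : A → ℝ) (τ : ℝ) (pol : A → ℝ) : ℝ :=
  ∑ a, pol a * (q a - τ * log (pol a / w a))

variable {w q : A → ℝ} {τ : ℝ}

theorem sum_gibbsPolicy (hZ : partitionFunction w q τ ≠ 0) : ∑ a, gibbsPolicy w q τ a = 1 := by
  simp only [gibbsPolicy, ← sum_div]
  exact div_self hZ

theorem gibbsPolicy_mul_regularizedReward (hτ : τ ≠ 0) (hZ : partitionFunction w q τ ≠ 0)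
    (a : A) :
    gibbsPolicy w q τ a * (q a - τ * log (gibbsPolicy w q τ a / w a)) =
      gibbsPolicy w q τ a * (τ * log (partitionFunction w q τ)) := by
  by_cases hw : w a = 0
  · simp [gibbsPolicy, hw]
  congr 1
  have hratio : gibbsPolicy w q τ a / w a = exp (q a / τ) / partitionFunction w q τ := by
    rw [gibbsPolicy, div_div, mul_comm (partitionFunction w q τ), mul_div_mul_left _ _ hw]
  rw [hratio, log_div (exp_ne_zero _) hZ, log_exp, mul_sub, mul_div_cancel₀ _ hτ, sub_sub_cancel]

theorem regularizedValue_gibbsPolicy (hτ : τ ≠ 0) (hZ : partitionFunction w q τ ≠ 0) :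
    regularizedValue w q τ (gibbsPolicy w q τ) = τ * log (partitionFunction w q τ) := by
  rw [regularizedValue, sum_congr rfl fun a _ => gibbsPolicy_mul_regularizedReward hτ hZ a,
    ← sum_mul, sum_gibbsPolicy hZ, one_mul]

theorem partitionFunction_pos [Nonempty A] (hw : ∀ a, 0 < w a) : 0 < partitionFunction w q τ :=
  sum_pos (fun a _ => mul_pos (hw a) (exp_pos _)) univ_nonempty

end EntropyRegularized

open EntropyRegularized in
theorem optimal_value_log_partition_general
    {S A : Type*} [Fintype A] [Nonempty A]
    (τ : ℝ) (hτ : 0 < τ)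
    (pibar : S → A → ℝ) (hpibar_pos : ∀ s a, 0 < pibar s a)
    -- optimal extended policy and its value and Q functions, defined recursively
    (Vstar : ℕ → S → ℝ) (Qstar : ℕ → A → S → ℝ) (pistar : ℕ → S → A → ℝ)
    (hpistar : ∀ i s a, pistar (i + 1) s a =
      pibar s a * Real.exp (Qstar (i + 1) a s / τ) /
        ∑ a', pibar s a' * Real.exp (Qstar (i + 1) a' s / τ))
    (hVstar : ∀ i s, Vstar (i + 1) s = ∑ a, pistar (i + 1) s a *
      (Qstar (i + 1) a s - τ * Real.log (pistar (i + 1) s a / pibar s a)))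
    (i : ℕ) (hi : 1 ≤ i) (s : S) :
    Vstar i s = τ * Real.log (∑ a, pibar s a * Real.exp (Qstar i a s / τ)) := by
  obtain ⟨j, rfl⟩ := Nat.exists_eq_add_of_le' hi
  have hgibbs : pistar (j + 1) s = gibbsPolicy (pibar s) (fun a => Qstar (j + 1) a s) τ :=
    funext (hpistar j s)
  have hZ := (partitionFunction_pos (q := fun a => Qstar (j + 1) a s) (τ := τ)
    (hpibar_pos s)).ne'
  rw [hVstar, hgibbs]
  exact regularizedValue_gibbsPolicy hτ.ne' hZ

/-- Log-partition expression of the optimal value function: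
for every state `s` and `1 ≤ i ≤ n`,
`V*^{(i)}(s) = τ log(Σ_a π̄(a|s) exp(Q*^{(i)}(a,s)/τ))`. -/
theorem optimal_value_log_partition
    {S A : Type*} [Fintype S] [Fintype A] [Nonempty S] [Nonempty A]
    (τ : ℝ) (hτ : 0 < τ)
    (pibar : S → A → ℝ) (hpibar_pos : ∀ s a, 0 < pibar s a)
    (hpibar_sum : ∀ s, ∑ a, pibar s a = 1)
    (r : A → S → ℝ)
    (p : S → A → S → ℝ) (hp_nonneg : ∀ s a s', 0 ≤ p s a s')
    (hp_sum : ∀ s a, ∑ s', p s a s' = 1)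
    (n : ℕ)
    -- optimal extended policy and its value and Q functions, defined recursively
    (Vstar : ℕ → S → ℝ) (Qstar : ℕ → A → S → ℝ) (pistar : ℕ → S → A → ℝ)
    (hVstar0 : ∀ s, Vstar 0 s = 0)
    (hQstar : ∀ i a s, Qstar (i + 1) a s = r a s + ∑ s', p s a s' * Vstar i s')
    (hpistar : ∀ i s a, pistar (i + 1) s a =
      pibar s a * Real.exp (Qstar (i + 1) a s / τ) /
        ∑ a', pibar s a' * Real.exp (Qstar (i + 1) a' s / τ))
    (hVstar : ∀ i s, Vstar (i + 1) s = ∑ a, pistar (i + 1) s a *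
      (Qstar (i + 1) a s - τ * Real.log (pistar (i + 1) s a / pibar s a)))
    (i : ℕ) (hi : 1 ≤ i) (hin : i ≤ n) (s : S) :
    Vstar i s = τ * Real.log (∑ a, pibar s a * Real.exp (Qstar i a s / τ)) :=
  optimal_value_log_partition_general τ hτ pibar hpibar_pos Vstar Qstar pistar hpistar hVstar i hi s
end

section
/- Uniqueness of the optimal extended policy: assume the transition kernel is everywhere positive, i.e. p(s,a,s') > 0 for all s, a, s'. If an extended policy π = (π^{(1)},…,π^{(n)}) with everywhere positive components satisfies J_n(π) = J_n(π*), where J_n(π) := Σ_{s∈S} V^{(n)}_π(s), then π^{(i)}(a|s) = π*^{(i)}(a|s) for all 1 ≤ i ≤ n, a ∈ A, s ∈ S. Consequently π* is the unique maximizer of J_n over extended policies of horizon n. -/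
/-!
With `Z(x) = ∑ₐ w a · exp (x a / τ)`, the regularized value of a policy `q` is
`∑ₐ q a (x a - τ log (q a / w a)) = τ log Z(x) - τ KL(q ‖ gibbs(x))`, so by Gibbs' inequality
it is at most `τ log Z(x)`, with equality exactly at the Gibbs policy. Since `log Z` is strictly
monotone, induction on the horizon gives `V⁽ⁱ⁾ ≤ V*⁽ⁱ⁾`, and equality of the objectives forces
`V⁽ⁿ⁾ = V*⁽ⁿ⁾` at every state. Equality `V⁽ⁱ⁺¹⁾ = V*⁽ⁱ⁺¹⁾` in turn forces `Q⁽ⁱ⁺¹⁾ = Q*⁽ⁱ⁺¹⁾` and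
`π⁽ⁱ⁺¹⁾ = gibbs(Q*⁽ⁱ⁺¹⁾) = π*⁽ⁱ⁺¹⁾`; as the kernel is positive, equal Q-values give
`V⁽ⁱ⁾ = V*⁽ⁱ⁾`, and we descend to `i = 1`.
-/

open Finset InformationTheory

section Gibbs

variable {A : Type*} [Fintype A]

theorem sum_mul_log_div_eq_sum_mul_klFun {q g : A → ℝ} (hg : ∀ a, 0 < g a)
    (hsum : ∑ a, q a = ∑ a, g a) :
    ∑ a, q a * Real.log (q a / g a) = ∑ a, g a * klFun (q a / g a) := by
  have hterm : ∀ a, g a * klFun (q a / g a) = q a * Real.log (q a / g a) + (g a - q a) := by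
    intro a
    rw [klFun_apply]
    field_simp [(hg a).ne']
    ring
  rw [sum_congr rfl fun a _ => hterm a, sum_add_distrib, sum_sub_distrib, hsum, sub_self,
    add_zero]

theorem sum_mul_log_div_nonneg {q g : A → ℝ} (hq : ∀ a, 0 ≤ q a) (hg : ∀ a, 0 < g a)
    (hsum : ∑ a, q a = ∑ a, g a) :
    0 ≤ ∑ a, q a * Real.log (q a / g a) := by
  rw [sum_mul_log_div_eq_sum_mul_klFun hg hsum]
  exact sum_nonneg fun a _ => mul_nonneg (hg a).le (klFun_nonneg (div_nonneg (hq a) (hg a).le))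

theorem eq_of_sum_mul_log_div_eq_zero {q g : A → ℝ} (hq : ∀ a, 0 ≤ q a) (hg : ∀ a, 0 < g a)
    (hsum : ∑ a, q a = ∑ a, g a) (h : ∑ a, q a * Real.log (q a / g a) = 0) :
    q = g := by
  rw [sum_mul_log_div_eq_sum_mul_klFun hg hsum, sum_eq_zero_iff_of_nonneg fun a _ =>
    mul_nonneg (hg a).le (klFun_nonneg (div_nonneg (hq a) (hg a).le))] at h
  funext a
  have hkl := (mul_eq_zero.mp (h a (mem_univ a))).resolve_left (hg a).ne'
  rwa [klFun_eq_zero_iff (div_nonneg (hq a) (hg a).le), div_eq_one_iff_eq (hg a).ne'] at hkl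

end Gibbs

section GibbsPolicy

variable {A : Type*} [Fintype A] {τ : ℝ} {w x y q : A → ℝ}

noncomputable def gibbsPartition (τ : ℝ) (w x : A → ℝ) : ℝ :=
  ∑ a, w a * Real.exp (x a / τ)

noncomputable def gibbsPolicy (τ : ℝ) (w x : A → ℝ) (a : A) : ℝ :=
  w a * Real.exp (x a / τ) / gibbsPartition τ w x

noncomputable def regularizedValue (τ : ℝ) (w x q : A → ℝ) : ℝ :=
  ∑ a, q a * (x a - τ * Real.log (q a / w a))

theorem gibbsPartition_pos [Nonempty A] (hw : ∀ a, 0 < w a) : 0 < gibbsPartition τ w x :=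
  sum_pos (fun a _ => mul_pos (hw a) (Real.exp_pos _)) univ_nonempty

theorem gibbsPolicy_pos [Nonempty A] (hw : ∀ a, 0 < w a) (a : A) : 0 < gibbsPolicy τ w x a :=
  div_pos (mul_pos (hw a) (Real.exp_pos _)) (gibbsPartition_pos hw)

theorem sum_gibbsPolicy [Nonempty A] (hw : ∀ a, 0 < w a) : ∑ a, gibbsPolicy τ w x a = 1 := by
  simp only [gibbsPolicy]
  rw [← sum_div]
  exact div_self (gibbsPartition_pos hw).ne'

theorem gibbsPartition_le_gibbsPartition (hτ : 0 ≤ τ) (hw : ∀ a, 0 ≤ w a) (hxy : x ≤ y) :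
    gibbsPartition τ w x ≤ gibbsPartition τ w y := by
  unfold gibbsPartition
  gcongr with a
  · exact hw a
  · exact hxy a

theorem eq_of_gibbsPartition_eq (hτ : 0 < τ) (hw : ∀ a, 0 < w a) (hxy : x ≤ y)
    (h : gibbsPartition τ w x = gibbsPartition τ w y) : x = y := by
  have hterm := (sum_eq_sum_iff_of_le fun a _ =>
    mul_le_mul_of_nonneg_left (Real.exp_le_exp.mpr (div_le_div_of_nonneg_right (hxy a) hτ.le))
      (hw a).le).mp h
  funext a
  have hexp := Real.exp_injective (mul_left_cancel₀ (hw a).ne' (hterm a (mem_univ a)))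
  rwa [div_left_inj' hτ.ne'] at hexp

theorem regularizedValue_eq [Nonempty A] (hτ : 0 < τ) (hw : ∀ a, 0 < w a) (hq : ∀ a, 0 ≤ q a)
    (hq_sum : ∑ a, q a = 1) :
    regularizedValue τ w x q =
      τ * Real.log (gibbsPartition τ w x) -
        τ * ∑ a, q a * Real.log (q a / gibbsPolicy τ w x a) := by
  have hZ := gibbsPartition_pos (τ := τ) (x := x) hw
  have hterm : ∀ a, q a * (x a - τ * Real.log (q a / w a)) =
      τ * Real.log (gibbsPartition τ w x) * q a -
        τ * (q a * Real.log (q a / gibbsPolicy τ w x a)) := by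
    intro a
    rcases (hq a).eq_or_lt with hqa | hqa
    · simp [← hqa]
    rw [gibbsPolicy, div_div_eq_mul_div,
      Real.log_div (mul_pos hqa hZ).ne' (mul_pos (hw a) (Real.exp_pos _)).ne',
      Real.log_mul hqa.ne' hZ.ne', Real.log_mul (hw a).ne' (Real.exp_pos _).ne', Real.log_exp,
      Real.log_div hqa.ne' (hw a).ne']
    field_simp
    ring
  rw [regularizedValue, sum_congr rfl fun a _ => hterm a, sum_sub_distrib, ← mul_sum, ← mul_sum,
    hq_sum, mul_one]

theorem regularizedValue_gibbsPolicy [Nonempty A] (hτ : 0 < τ) (hw : ∀ a, 0 < w a) :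
    regularizedValue τ w x (gibbsPolicy τ w x) = τ * Real.log (gibbsPartition τ w x) := by
  rw [regularizedValue_eq hτ hw (fun a => (gibbsPolicy_pos hw a).le) (sum_gibbsPolicy hw)]
  simp [div_self (gibbsPolicy_pos hw _).ne']

theorem regularizedValue_le_of_le [Nonempty A] (hτ : 0 < τ) (hw : ∀ a, 0 < w a)
    (hq : ∀ a, 0 ≤ q a) (hq_sum : ∑ a, q a = 1) (hxy : x ≤ y) :
    regularizedValue τ w x q ≤ τ * Real.log (gibbsPartition τ w y) := by
  rw [regularizedValue_eq hτ hw hq hq_sum]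
  have hkl := sum_mul_log_div_nonneg hq (gibbsPolicy_pos (τ := τ) (x := x) hw)
    (by rw [hq_sum, sum_gibbsPolicy hw])
  have hlog := Real.log_le_log (gibbsPartition_pos hw)
    (gibbsPartition_le_gibbsPartition hτ.le (fun a => (hw a).le) hxy)
  nlinarith

theorem eq_gibbsPolicy_of_regularizedValue_eq [Nonempty A] (hτ : 0 < τ) (hw : ∀ a, 0 < w a)
    (hq : ∀ a, 0 ≤ q a) (hq_sum : ∑ a, q a = 1) (hxy : x ≤ y)
    (h : regularizedValue τ w x q = τ * Real.log (gibbsPartition τ w y)) :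
    x = y ∧ q = gibbsPolicy τ w y := by
  rw [regularizedValue_eq hτ hw hq hq_sum] at h
  have hsum : ∑ a, q a = ∑ a, gibbsPolicy τ w x a := by rw [hq_sum, sum_gibbsPolicy hw]
  have hkl := sum_mul_log_div_nonneg hq (gibbsPolicy_pos hw) hsum
  have hlog := Real.log_le_log (gibbsPartition_pos hw)
    (gibbsPartition_le_gibbsPartition hτ.le (fun a => (hw a).le) hxy)
  have hkl_zero : ∑ a, q a * Real.log (q a / gibbsPolicy τ w x a) = 0 := by nlinarith
  have hxy_eq : x = y := eq_of_gibbsPartition_eq hτ hw hxy <|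
    Real.log_injOn_pos (gibbsPartition_pos hw) (gibbsPartition_pos hw) (by nlinarith)
  subst hxy_eq
  exact ⟨rfl, eq_of_sum_mul_log_div_eq_zero hq (gibbsPolicy_pos hw) hsum hkl_zero⟩

end GibbsPolicy

section Bellman

variable {S A : Type*} [Fintype S]

def qValue (r : A → S → ℝ) (p : S → A → S → ℝ) (v : S → ℝ) (a : A) (s : S) : ℝ :=
  r a s + ∑ s', p s a s' * v s'

variable {r : A → S → ℝ} {p : S → A → S → ℝ} {v v' : S → ℝ}

theorem qValue_le_qValue (hp : ∀ s a s', 0 ≤ p s a s') (hv : v ≤ v') (a : A) (s : S) :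
    qValue r p v a s ≤ qValue r p v' a s := by
  unfold qValue
  gcongr with s'
  · exact hp s a s'
  · exact hv s'

theorem eq_of_qValue_eq [Nonempty A] (hp : ∀ s a s', 0 < p s a s') (hv : v ≤ v')
    (h : ∀ a s, qValue r p v a s = qValue r p v' a s) : v = v' := by
  funext s
  obtain ⟨a⟩ := ‹Nonempty A›
  have hsum := add_left_cancel (h a s)
  exact mul_left_cancel₀ (hp s a s).ne' <| (sum_eq_sum_iff_of_le fun t _ =>
    mul_le_mul_of_nonneg_left (hv t) (hp s a t).le).mp hsum s (mem_univ s)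

variable [Fintype A] [Nonempty A] {τ : ℝ} {pibar : S → A → ℝ} {π : ℕ → S → A → ℝ}
  {V Vstar : ℕ → S → ℝ} {Q Qstar : ℕ → A → S → ℝ}

theorem value_le_optimalValue (hτ : 0 < τ) (hpibar : ∀ s a, 0 < pibar s a)
    (hp : ∀ s a s', 0 ≤ p s a s') (hπ_nonneg : ∀ i s a, 0 ≤ π i s a)
    (hπ_sum : ∀ i s, ∑ a, π i s a = 1)
    (hV0 : ∀ s, V 0 s = 0) (hQ : ∀ i a s, Q (i + 1) a s = qValue r p (V i) a s)
    (hV : ∀ i s, V (i + 1) s = regularizedValue τ (pibar s) (Q (i + 1) · s) (π (i + 1) s))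
    (hVstar0 : ∀ s, Vstar 0 s = 0)
    (hQstar : ∀ i a s, Qstar (i + 1) a s = qValue r p (Vstar i) a s)
    (hVstar : ∀ i s,
      Vstar (i + 1) s = τ * Real.log (gibbsPartition τ (pibar s) (Qstar (i + 1) · s))) :
    ∀ i, V i ≤ Vstar i := by
  intro i
  induction i with
  | zero => intro s; rw [hV0, hVstar0]
  | succ i ih =>
    intro s
    rw [hV, hVstar]
    refine regularizedValue_le_of_le hτ (hpibar s) (hπ_nonneg _ s) (hπ_sum _ s) fun a => ?_
    rw [hQ, hQstar]
    exact qValue_le_qValue hp ih a s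

theorem eq_optimal_of_value_succ_eq (hτ : 0 < τ) (hpibar : ∀ s a, 0 < pibar s a)
    (hp : ∀ s a s', 0 < p s a s') (hπ_nonneg : ∀ i s a, 0 ≤ π i s a)
    (hπ_sum : ∀ i s, ∑ a, π i s a = 1)
    (hQ : ∀ i a s, Q (i + 1) a s = qValue r p (V i) a s)
    (hV : ∀ i s, V (i + 1) s = regularizedValue τ (pibar s) (Q (i + 1) · s) (π (i + 1) s))
    (hQstar : ∀ i a s, Qstar (i + 1) a s = qValue r p (Vstar i) a s)
    (hVstar : ∀ i s,
      Vstar (i + 1) s = τ * Real.log (gibbsPartition τ (pibar s) (Qstar (i + 1) · s)))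
    {i : ℕ} (hle : V i ≤ Vstar i) (heq : V (i + 1) = Vstar (i + 1)) :
    V i = Vstar i ∧ ∀ s, π (i + 1) s = gibbsPolicy τ (pibar s) (Qstar (i + 1) · s) := by
  have hQle : ∀ s a, Q (i + 1) a s ≤ Qstar (i + 1) a s := fun s a => by
    rw [hQ, hQstar]
    exact qValue_le_qValue (fun s a s' => (hp s a s').le) hle a s
  have key := fun s => eq_gibbsPolicy_of_regularizedValue_eq hτ (hpibar s) (hπ_nonneg _ s)
    (hπ_sum _ s) (hQle s) (by rw [← hV, ← hVstar, heq])
  refine ⟨eq_of_qValue_eq (r := r) hp hle fun a s => ?_, fun s => (key s).2⟩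
  rw [← hQ, ← hQstar]
  exact congrFun (key s).1 a

end Bellman

theorem optimal_extended_policy_unique_general
    {S A : Type*} [Fintype S] [Fintype A] [Nonempty A]
    (τ : ℝ) (hτ : 0 < τ)
    (pibar : S → A → ℝ) (hpibar_pos : ∀ s a, 0 < pibar s a)
    (r : A → S → ℝ)
    (p : S → A → S → ℝ) (hp_pos : ∀ s a s', 0 < p s a s')
    (n : ℕ)
    -- the extended policy `π`, with `π i` its `i`-step component
    (π : ℕ → S → A → ℝ)
    (hπ_pos : ∀ i s a, 0 < π i s a) (hπ_sum : ∀ i s, ∑ a, π i s a = 1)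
    -- value and Q functions of `π`, defined recursively
    (V : ℕ → S → ℝ) (Q : ℕ → A → S → ℝ)
    (hV0 : ∀ s, V 0 s = 0)
    (hQ : ∀ i a s, Q (i + 1) a s = r a s + ∑ s', p s a s' * V i s')
    (hV : ∀ i s, V (i + 1) s = ∑ a, π (i + 1) s a *
      (Q (i + 1) a s - τ * Real.log (π (i + 1) s a / pibar s a)))
    -- optimal extended policy and its value and Q functions, defined recursively
    (Vstar : ℕ → S → ℝ) (Qstar : ℕ → A → S → ℝ) (pistar : ℕ → S → A → ℝ)
    (hVstar0 : ∀ s, Vstar 0 s = 0)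
    (hQstar : ∀ i a s, Qstar (i + 1) a s = r a s + ∑ s', p s a s' * Vstar i s')
    (hpistar : ∀ i s a, pistar (i + 1) s a =
      pibar s a * Real.exp (Qstar (i + 1) a s / τ) /
        ∑ a', pibar s a' * Real.exp (Qstar (i + 1) a' s / τ))
    (hVstar : ∀ i s, Vstar (i + 1) s = ∑ a, pistar (i + 1) s a *
      (Qstar (i + 1) a s - τ * Real.log (pistar (i + 1) s a / pibar s a)))
    -- the objectives coincide
    (hJ : ∑ s, V n s = ∑ s, Vstar n s) :
    ∀ i, 1 ≤ i → i ≤ n → ∀ s a, π i s a = pistar i s a := by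
  have hπ_nonneg i s a := (hπ_pos i s a).le
  have hpistar_gibbs i s : pistar (i + 1) s = gibbsPolicy τ (pibar s) (Qstar (i + 1) · s) :=
    funext (hpistar i s)
  have hVstar_log i s : Vstar (i + 1) s =
      τ * Real.log (gibbsPartition τ (pibar s) (Qstar (i + 1) · s)) := by
    rw [hVstar, hpistar_gibbs]
    exact regularizedValue_gibbsPolicy hτ (hpibar_pos s)
  have hle := value_le_optimalValue hτ hpibar_pos (fun s a s' => (hp_pos s a s').le) hπ_nonneg
    hπ_sum hV0 hQ hV hVstar0 hQstar hVstar_log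
  have step i := eq_optimal_of_value_succ_eq hτ hpibar_pos hp_pos hπ_nonneg hπ_sum hQ hV hQstar
    hVstar_log (hle i)
  have hVn : V n = Vstar n := funext fun s =>
    (sum_eq_sum_iff_of_le fun t _ => hle n t).mp hJ s (mem_univ s)
  intro i hi hin s a
  obtain ⟨k, rfl⟩ := Nat.exists_eq_add_of_le' hi
  have hVk : V (k + 1) = Vstar (k + 1) :=
    Nat.decreasingInduction (motive := fun m _ => V m = Vstar m) (fun j _ ih => (step j ih).1)
      hVn hin
  rw [(step k hVk).2 s, hpistar_gibbs]

/-- Uniqueness of the optimal extended policy: assume the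
transition kernel is everywhere positive. If an extended policy `π` with
everywhere positive components satisfies `J_n(π) = J_n(π*)`, where
`J_n(π) = Σ_s V^{(n)}_π(s)`, then `π^{(i)} = π*^{(i)}` for all `1 ≤ i ≤ n`;
hence `π*` is the unique maximizer of `J_n`. -/
theorem optimal_extended_policy_unique
    {S A : Type*} [Fintype S] [Fintype A] [Nonempty S] [Nonempty A]
    (τ : ℝ) (hτ : 0 < τ)
    (pibar : S → A → ℝ) (hpibar_pos : ∀ s a, 0 < pibar s a)
    (hpibar_sum : ∀ s, ∑ a, pibar s a = 1)
    (r : A → S → ℝ)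
    (p : S → A → S → ℝ) (hp_pos : ∀ s a s', 0 < p s a s')
    (hp_sum : ∀ s a, ∑ s', p s a s' = 1)
    (n : ℕ) (hn : 1 ≤ n)
    -- the extended policy `π`, with `π i` its `i`-step component
    (π : ℕ → S → A → ℝ)
    (hπ_pos : ∀ i s a, 0 < π i s a) (hπ_sum : ∀ i s, ∑ a, π i s a = 1)
    -- value and Q functions of `π`, defined recursively
    (V : ℕ → S → ℝ) (Q : ℕ → A → S → ℝ)
    (hV0 : ∀ s, V 0 s = 0)
    (hQ : ∀ i a s, Q (i + 1) a s = r a s + ∑ s', p s a s' * V i s')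
    (hV : ∀ i s, V (i + 1) s = ∑ a, π (i + 1) s a *
      (Q (i + 1) a s - τ * Real.log (π (i + 1) s a / pibar s a)))
    -- optimal extended policy and its value and Q functions, defined recursively
    (Vstar : ℕ → S → ℝ) (Qstar : ℕ → A → S → ℝ) (pistar : ℕ → S → A → ℝ)
    (hVstar0 : ∀ s, Vstar 0 s = 0)
    (hQstar : ∀ i a s, Qstar (i + 1) a s = r a s + ∑ s', p s a s' * Vstar i s')
    (hpistar : ∀ i s a, pistar (i + 1) s a =
      pibar s a * Real.exp (Qstar (i + 1) a s / τ) /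
        ∑ a', pibar s a' * Real.exp (Qstar (i + 1) a' s / τ))
    (hVstar : ∀ i s, Vstar (i + 1) s = ∑ a, pistar (i + 1) s a *
      (Qstar (i + 1) a s - τ * Real.log (pistar (i + 1) s a / pibar s a)))
    -- the objectives coincide
    (hJ : ∑ s, V n s = ∑ s, Vstar n s) :
    ∀ i, 1 ≤ i → i ≤ n → ∀ s a, π i s a = pistar i s a :=
  optimal_extended_policy_unique_general τ hτ pibar hpibar_pos r p hp_pos n π hπ_pos hπ_sum V Q hV0
    hQ hV Vstar Qstar pistar hVstar0 hQstar hpistar hVstar hJ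
end

section
/- Consistency of optimal extended policies across horizons (truncation property): assume p(s,a,s') > 0 for all s, a, s'. If an extended policy π = (π^{(1)},…,π^{(n)}) of horizon n with everywhere positive components maximizes J_n, then for every 1 ≤ m < n the truncated extended policy T_{n,m}(π) := (π^{(1)},…,π^{(m)}) maximizes J_m over extended policies of horizon m; that is, the optimal policies satisfy T_{n,m}(π_{*,n}) = π_{*,m}. -/
/-!
The soft Bellman recursion `V*ᵢ₊₁(s) = τ log Σₐ π̄(a|s) exp(Q*ᵢ₊₁(a,s)/τ)` bounds the value of
every policy, `Vᵢ ≤ V*ᵢ`, by the Gibbs variational principle (Jensen for `log`), and the Gibbs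
policies attain it. Optimality of `π` at horizon `n` therefore forces `Vₙ = V*ₙ`. Because the
kernel is positive, a deficit `Vᵢ(s₀) < V*ᵢ(s₀)` at a single state would produce a deficit at
every state at horizon `i + 1`; so `Vₘ = V*ₘ` for every `m ≤ n`, and the truncation is optimal.
-/

open Finset
open Real (exp log exp_pos log_div log_mul log_exp)

section Gibbs

variable {A : Type*} [Fintype A]

theorem sum_mul_sub_log_div_le_log_sum_exp {τ : ℝ} (hτ : 0 < τ) {w μ : A → ℝ}
    (hw : ∀ a, 0 < w a) (hμ : ∀ a, 0 < μ a) (hμ_sum : ∑ a, μ a = 1) (q : A → ℝ) :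
    ∑ a, μ a * (q a - τ * log (μ a / w a)) ≤ τ * log (∑ a, w a * exp (q a / τ)) := by
  have hwe : ∀ a, 0 < w a * exp (q a / τ) := fun a ↦ mul_pos (hw a) (exp_pos _)
  have hterm : ∀ a, μ a * (q a - τ * log (μ a / w a)) =
      τ * (μ a • log (w a * exp (q a / τ) / μ a)) := fun a ↦ by
    rw [smul_eq_mul, log_div (hμ a).ne' (hw a).ne', log_div (hwe a).ne' (hμ a).ne',
      log_mul (hw a).ne' (exp_pos _).ne', log_exp]
    field_simp
    ring
  have hmean : ∑ a, μ a • (w a * exp (q a / τ) / μ a) = ∑ a, w a * exp (q a / τ) :=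
    sum_congr rfl fun a _ ↦ by rw [smul_eq_mul, mul_div_cancel₀ _ (hμ a).ne']
  have jensen := strictConcaveOn_log_Ioi.concaveOn.le_map_sum (t := univ)
    (fun a _ ↦ (hμ a).le) hμ_sum (fun a _ ↦ div_pos (hwe a) (hμ a))
  rw [hmean] at jensen
  simp only [hterm, ← mul_sum]
  exact mul_le_mul_of_nonneg_left jensen hτ.le

noncomputable def gibbsDist (τ : ℝ) (w q : A → ℝ) (a : A) : ℝ :=
  w a * exp (q a / τ) / ∑ b, w b * exp (q b / τ)

variable [Nonempty A] {w : A → ℝ}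

theorem sum_mul_exp_pos_s14 (hw : ∀ a, 0 < w a) (f : A → ℝ) : 0 < ∑ a, w a * exp (f a) :=
  sum_pos (fun a _ ↦ mul_pos (hw a) (exp_pos _)) univ_nonempty

theorem gibbsDist_pos (τ : ℝ) (hw : ∀ a, 0 < w a) (q : A → ℝ) (a : A) :
    0 < gibbsDist τ w q a :=
  div_pos (mul_pos (hw a) (exp_pos _)) (sum_mul_exp_pos_s14 hw _)

theorem sum_gibbsDist (τ : ℝ) (hw : ∀ a, 0 < w a) (q : A → ℝ) :
    ∑ a, gibbsDist τ w q a = 1 := by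
  simp only [gibbsDist, ← sum_div, div_self (sum_mul_exp_pos_s14 hw _).ne']

theorem sum_gibbsDist_mul_sub_log_div {τ : ℝ} (hτ : τ ≠ 0) (hw : ∀ a, 0 < w a) (q : A → ℝ) :
    ∑ a, gibbsDist τ w q a * (q a - τ * log (gibbsDist τ w q a / w a)) =
      τ * log (∑ a, w a * exp (q a / τ)) := by
  set Z := ∑ b, w b * exp (q b / τ)
  have hZ : 0 < Z := sum_mul_exp_pos_s14 hw _
  have hterm : ∀ a, q a - τ * log (gibbsDist τ w q a / w a) = τ * log Z := fun a ↦ by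
    rw [gibbsDist, div_right_comm, mul_div_cancel_left₀ _ (hw a).ne',
      log_div (exp_pos _).ne' hZ.ne', log_exp]
    field_simp
    ring
  simp only [hterm, ← sum_mul, sum_gibbsDist τ hw, one_mul]

end Gibbs

section SoftValue

variable {S A : Type*} [Fintype S] [Fintype A]
  (τ : ℝ) (pibar : S → A → ℝ) (r : A → S → ℝ) (p : S → A → S → ℝ)

def backup (v : S → ℝ) (a : A) (s : S) : ℝ :=
  r a s + ∑ s', p s a s' * v s'

noncomputable def optValue : ℕ → S → ℝ
  | 0 => 0
  | i + 1 => fun s ↦ τ * log (∑ a, pibar s a * exp (backup r p (optValue i) a s / τ))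

/-- `i - 1` truncates at `i = 0`, a component that never enters a value function. -/
noncomputable def optPolicy (i : ℕ) (s : S) : A → ℝ :=
  gibbsDist τ (pibar s) (fun a ↦ backup r p (optValue τ pibar r p (i - 1)) a s)

/-- `V` and `Q` are the value and Q functions of the extended policy `π`; `Q 0` is unconstrained. -/
structure IsSoftValue (π : ℕ → S → A → ℝ) (V : ℕ → S → ℝ) (Q : ℕ → A → S → ℝ) : Prop where
  zero : ∀ s, V 0 s = 0
  q_succ : ∀ i a s, Q (i + 1) a s = r a s + ∑ s', p s a s' * V i s'
  v_succ : ∀ i s, V (i + 1) s = ∑ a, π (i + 1) s a *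
    (Q (i + 1) a s - τ * log (π (i + 1) s a / pibar s a))

variable {τ pibar r p}

theorem isSoftValue_optPolicy [Nonempty A] (hτ : τ ≠ 0) (hpibar : ∀ s a, 0 < pibar s a) :
    IsSoftValue τ pibar r p (optPolicy τ pibar r p) (optValue τ pibar r p)
      (fun i ↦ backup r p (optValue τ pibar r p (i - 1))) where
  zero _ := rfl
  q_succ _ _ _ := rfl
  v_succ _ s := (sum_gibbsDist_mul_sub_log_div hτ (hpibar s) _).symm

variable {π : ℕ → S → A → ℝ} {V : ℕ → S → ℝ} {Q : ℕ → A → S → ℝ}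

theorem IsSoftValue.succ_le_optValue_add (h : IsSoftValue τ pibar r p π V Q) (hτ : 0 < τ)
    (hpibar : ∀ s a, 0 < pibar s a) (hπ : ∀ i s a, 0 < π i s a)
    (hπ_sum : ∀ i s, ∑ a, π i s a = 1) (i : ℕ) (s : S) :
    V (i + 1) s ≤ optValue τ pibar r p (i + 1) s +
      ∑ a, π (i + 1) s a * ∑ s', p s a s' * (V i s' - optValue τ pibar r p i s') := by
  set q := backup r p (optValue τ pibar r p i)
  have hQ : ∀ a, Q (i + 1) a s = q a s + ∑ s', p s a s' * (V i s' - optValue τ pibar r p i s') :=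
    fun a ↦ by simp only [h.q_succ, q, backup, mul_sub, sum_sub_distrib]; ring
  have hgibbs := sum_mul_sub_log_div_le_log_sum_exp hτ (hpibar s) (hπ (i + 1) s) (hπ_sum _ s)
    (fun a ↦ q a s)
  calc V (i + 1) s
      = ∑ a, π (i + 1) s a * (q a s - τ * log (π (i + 1) s a / pibar s a)) +
        ∑ a, π (i + 1) s a * ∑ s', p s a s' * (V i s' - optValue τ pibar r p i s') := by
        simp only [h.v_succ, hQ, ← sum_add_distrib]
        exact sum_congr rfl fun a _ ↦ by ring
    _ ≤ _ := add_le_add_left hgibbs _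

theorem IsSoftValue.le_optValue (h : IsSoftValue τ pibar r p π V Q) (hτ : 0 < τ)
    (hpibar : ∀ s a, 0 < pibar s a) (hp : ∀ s a s', 0 ≤ p s a s') (hπ : ∀ i s a, 0 < π i s a)
    (hπ_sum : ∀ i s, ∑ a, π i s a = 1) (i : ℕ) (s : S) :
    V i s ≤ optValue τ pibar r p i s := by
  induction i generalizing s with
  | zero => simp [h.zero, optValue]
  | succ i ih =>
    have hcorr : ∑ a, π (i + 1) s a * ∑ s', p s a s' * (V i s' - optValue τ pibar r p i s') ≤ 0 :=
      sum_nonpos fun a _ ↦ mul_nonpos_of_nonneg_of_nonpos (hπ _ s a).le <|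
        sum_nonpos fun s' _ ↦ mul_nonpos_of_nonneg_of_nonpos (hp s a s') (sub_nonpos.2 (ih s'))
    linarith [h.succ_le_optValue_add hτ hpibar hπ hπ_sum i s]

theorem IsSoftValue.succ_lt_optValue [Nonempty A] (h : IsSoftValue τ pibar r p π V Q)
    (hτ : 0 < τ) (hpibar : ∀ s a, 0 < pibar s a) (hp : ∀ s a s', 0 < p s a s')
    (hπ : ∀ i s a, 0 < π i s a) (hπ_sum : ∀ i s, ∑ a, π i s a = 1) {i : ℕ} {s₀ : S}
    (hs₀ : V i s₀ < optValue τ pibar r p i s₀) (s : S) :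
    V (i + 1) s < optValue τ pibar r p (i + 1) s := by
  have hle := h.le_optValue hτ hpibar (fun s a s' ↦ (hp s a s').le) hπ hπ_sum i
  have hcorr : ∑ a, π (i + 1) s a * ∑ s', p s a s' * (V i s' - optValue τ pibar r p i s') < 0 :=
    sum_neg (fun a _ ↦ mul_neg_of_pos_of_neg (hπ _ s a) <|
      sum_neg' (fun s' _ ↦ mul_nonpos_of_nonneg_of_nonpos (hp s a s').le (sub_nonpos.2 (hle s')))
        ⟨s₀, mem_univ _, mul_neg_of_pos_of_neg (hp s a s₀) (sub_neg.2 hs₀)⟩) univ_nonempty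
  linarith [h.succ_le_optValue_add hτ hpibar hπ hπ_sum i s]

theorem IsSoftValue.eq_optValue_of_le [Nonempty A] (h : IsSoftValue τ pibar r p π V Q)
    (hτ : 0 < τ) (hpibar : ∀ s a, 0 < pibar s a) (hp : ∀ s a s', 0 < p s a s')
    (hπ : ∀ i s a, 0 < π i s a) (hπ_sum : ∀ i s, ∑ a, π i s a = 1) {m n : ℕ} (hmn : m ≤ n)
    (hn : V n = optValue τ pibar r p n) : V m = optValue τ pibar r p m := by
  induction hmn using Nat.decreasingInduction with
  | self => exact hn
  | of_succ k _ ih =>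
    funext s
    refine (h.le_optValue hτ hpibar (fun s a s' ↦ (hp s a s').le) hπ hπ_sum k s).antisymm ?_
    by_contra hlt
    exact (h.succ_lt_optValue hτ hpibar hp hπ hπ_sum (not_le.1 hlt) s).ne (congrFun ih s)

end SoftValue

theorem truncation_of_optimal_extended_policy_general
    {S A : Type*} [Fintype S] [Fintype A] [Nonempty A]
    (τ : ℝ) (hτ : 0 < τ)
    (pibar : S → A → ℝ) (hpibar_pos : ∀ s a, 0 < pibar s a)
    (r : A → S → ℝ)
    (p : S → A → S → ℝ) (hp_pos : ∀ s a s', 0 < p s a s')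
    (n : ℕ)
    -- the extended policy `π`, with `π i` its `i`-step component
    (π : ℕ → S → A → ℝ)
    (hπ_pos : ∀ i s a, 0 < π i s a) (hπ_sum : ∀ i s, ∑ a, π i s a = 1)
    -- value and Q functions of `π`, defined recursively
    (V : ℕ → S → ℝ) (Q : ℕ → A → S → ℝ)
    (hV0 : ∀ s, V 0 s = 0)
    (hQ : ∀ i a s, Q (i + 1) a s = r a s + ∑ s', p s a s' * V i s')
    (hV : ∀ i s, V (i + 1) s = ∑ a, π (i + 1) s a *
      (Q (i + 1) a s - τ * Real.log (π (i + 1) s a / pibar s a)))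
    -- `π` maximizes `J_n` over extended policies (with positive components)
    (hmax : ∀ (π' : ℕ → S → A → ℝ),
      (∀ i s a, 0 < π' i s a) → (∀ i s, ∑ a, π' i s a = 1) →
      ∀ (V' : ℕ → S → ℝ) (Q' : ℕ → A → S → ℝ),
        (∀ s, V' 0 s = 0) →
        (∀ i a s, Q' (i + 1) a s = r a s + ∑ s', p s a s' * V' i s') →
        (∀ i s, V' (i + 1) s = ∑ a, π' (i + 1) s a *
          (Q' (i + 1) a s - τ * Real.log (π' (i + 1) s a / pibar s a))) →
        (∑ s, V' n s) ≤ ∑ s, V n s) :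
    -- the truncation of `π` to any horizon `1 ≤ m < n` maximizes `J_m`
    ∀ m, 1 ≤ m → m < n →
      ∀ (π' : ℕ → S → A → ℝ),
        (∀ i s a, 0 < π' i s a) → (∀ i s, ∑ a, π' i s a = 1) →
        ∀ (V' : ℕ → S → ℝ) (Q' : ℕ → A → S → ℝ),
          (∀ s, V' 0 s = 0) →
          (∀ i a s, Q' (i + 1) a s = r a s + ∑ s', p s a s' * V' i s') →
          (∀ i s, V' (i + 1) s = ∑ a, π' (i + 1) s a *
            (Q' (i + 1) a s - τ * Real.log (π' (i + 1) s a / pibar s a))) →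
          (∑ s, V' m s) ≤ ∑ s, V m s := by
  intro m _ hmn π' hπ'_pos hπ'_sum V' Q' hV'0 hQ' hV'
  have hp_nonneg : ∀ s a s', 0 ≤ p s a s' := fun s a s' ↦ (hp_pos s a s').le
  have hπV : IsSoftValue τ pibar r p π V Q := ⟨hV0, hQ, hV⟩
  have hπ'V' : IsSoftValue τ pibar r p π' V' Q' := ⟨hV'0, hQ', hV'⟩
  have hopt := isSoftValue_optPolicy (r := r) (p := p) hτ.ne' hpibar_pos
  have hJ_le : ∑ s, optValue τ pibar r p n s ≤ ∑ s, V n s :=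
    hmax (optPolicy τ pibar r p) (fun _ s ↦ gibbsDist_pos τ (hpibar_pos s) _)
      (fun _ s ↦ sum_gibbsDist τ (hpibar_pos s) _) (optValue τ pibar r p)
      (fun i ↦ backup r p (optValue τ pibar r p (i - 1))) hopt.zero hopt.q_succ hopt.v_succ
  have hV_le := hπV.le_optValue hτ hpibar_pos hp_nonneg hπ_pos hπ_sum
  have hVn : V n = optValue τ pibar r p n := by
    have hsum_eq := le_antisymm (sum_le_sum fun s _ ↦ hV_le n s) hJ_le
    exact funext fun s ↦ (sum_eq_sum_iff_of_le fun s _ ↦ hV_le n s).1 hsum_eq s (mem_univ s)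
  rw [hπV.eq_optValue_of_le hτ hpibar_pos hp_pos hπ_pos hπ_sum hmn.le hVn]
  exact sum_le_sum fun s _ ↦ hπ'V'.le_optValue hτ hpibar_pos hp_nonneg hπ'_pos hπ'_sum m s

/-- Consistency of optimal extended policies across horizons
(truncation property): assume the transition kernel is everywhere positive. If
an extended policy `π` of horizon `n` with everywhere positive components
maximizes `J_n` over extended policies, then for every `1 ≤ m < n` its
truncation `(π^{(1)},…,π^{(m)})` maximizes `J_m`; i.e.
`T_{n,m}(π_{*,n}) = π_{*,m}`. (The value function of the truncated policy at
horizon `m` is `V^{(m)}_π`.) -/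
theorem truncation_of_optimal_extended_policy
    {S A : Type*} [Fintype S] [Fintype A] [Nonempty S] [Nonempty A]
    (τ : ℝ) (hτ : 0 < τ)
    (pibar : S → A → ℝ) (hpibar_pos : ∀ s a, 0 < pibar s a)
    (hpibar_sum : ∀ s, ∑ a, pibar s a = 1)
    (r : A → S → ℝ)
    (p : S → A → S → ℝ) (hp_pos : ∀ s a s', 0 < p s a s')
    (hp_sum : ∀ s a, ∑ s', p s a s' = 1)
    (n : ℕ) (hn : 1 ≤ n)
    -- the extended policy `π`, with `π i` its `i`-step component
    (π : ℕ → S → A → ℝ)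
    (hπ_pos : ∀ i s a, 0 < π i s a) (hπ_sum : ∀ i s, ∑ a, π i s a = 1)
    -- value and Q functions of `π`, defined recursively
    (V : ℕ → S → ℝ) (Q : ℕ → A → S → ℝ)
    (hV0 : ∀ s, V 0 s = 0)
    (hQ : ∀ i a s, Q (i + 1) a s = r a s + ∑ s', p s a s' * V i s')
    (hV : ∀ i s, V (i + 1) s = ∑ a, π (i + 1) s a *
      (Q (i + 1) a s - τ * Real.log (π (i + 1) s a / pibar s a)))
    -- `π` maximizes `J_n` over extended policies (with positive components)
    (hmax : ∀ (π' : ℕ → S → A → ℝ),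
      (∀ i s a, 0 < π' i s a) → (∀ i s, ∑ a, π' i s a = 1) →
      ∀ (V' : ℕ → S → ℝ) (Q' : ℕ → A → S → ℝ),
        (∀ s, V' 0 s = 0) →
        (∀ i a s, Q' (i + 1) a s = r a s + ∑ s', p s a s' * V' i s') →
        (∀ i s, V' (i + 1) s = ∑ a, π' (i + 1) s a *
          (Q' (i + 1) a s - τ * Real.log (π' (i + 1) s a / pibar s a))) →
        (∑ s, V' n s) ≤ ∑ s, V n s) :
    -- the truncation of `π` to any horizon `1 ≤ m < n` maximizes `J_m`
    ∀ m, 1 ≤ m → m < n →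
      ∀ (π' : ℕ → S → A → ℝ),
        (∀ i s a, 0 < π' i s a) → (∀ i s, ∑ a, π' i s a = 1) →
        ∀ (V' : ℕ → S → ℝ) (Q' : ℕ → A → S → ℝ),
          (∀ s, V' 0 s = 0) →
          (∀ i a s, Q' (i + 1) a s = r a s + ∑ s', p s a s' * V' i s') →
          (∀ i s, V' (i + 1) s = ∑ a, π' (i + 1) s a *
            (Q' (i + 1) a s - τ * Real.log (π' (i + 1) s a / pibar s a))) →
          (∑ s, V' m s) ≤ ∑ s, V m s :=
  truncation_of_optimal_extended_policy_general τ hτ pibar hpibar_pos r p hp_pos n π hπ_pos hπ_sum V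
    Q hV0 hQ hV hmax
end

section
/- Matryoshka Policy Gradient theorem (ideal update, finite state space): let π_θ = (π^{(1)}_{θ^{(1)}},…,π^{(n)}_{θ^{(n)}}) be an extended policy whose i-step policies are softmax of linear preferences with disjoint parameters θ^{(i)} ∈ ℝ^P. Then for every 1 ≤ i ≤ n, ∇_{θ^{(i)}} J_n(π_θ) = Σ_{s∈S} ρ^{(n−i)}(s) ∇_{θ^{(i)}} V^{(i)}_{π_θ}(s) = Σ_{s∈S} ρ^{(n−i)}(s) Σ_{a∈A} π^{(i)}_{θ^{(i)}}(a|s) ( Q^{(i)}_{π_θ}(a,s) − τ log(π^{(i)}_{θ^{(i)}}(a|s)/π̄(a|s)) ) ∇_{θ^{(i)}} log π^{(i)}_{θ^{(i)}}(a|s), where ρ^{(k)} is the occupancy weight of the state visited after k steps. -/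
open scoped RealInnerProductSpace

/-!
The components of the extended policy other than the `i`-step one do not move with `θ^{(i)}`. Hence
`V^{(j)}` is constant in `θ` for `j < i`, and for `j > i` the Bellman recursion makes `∇V^{(j)}(s)`
the average of `∇V^{(j-1)}` under the one-step kernel `Σ_a π^{(j)}(a|s) p(s,a,·)`. Pairing these
backward averages with the forward occupancy weights, `Σ_s ρ^{(k)}(s) ∇V^{(n-k)}(s)` does not depend
on `k`; comparing `k = 0` with `k = n - i` gives the first identity. At level `i`, differentiating
`Σ_a π(a) (Q(a) - τ log (π(a) / π̄(a)))` gives the score-function term plus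
`-τ Σ_a π(a) ∇log π(a) = -τ ∇(Σ_a π(a)) = 0`.
-/

section Regularized

variable {E A : Type*} [NormedAddCommGroup E] [NormedSpace ℝ E] [Fintype A]

theorem hasFDerivAt_of_hasFDerivAt_log {f : E → ℝ} {f' : StrongDual ℝ E} {x : E}
    (hf : ∀ y, 0 < f y) (hlog : HasFDerivAt (fun y => Real.log (f y)) f' x) :
    HasFDerivAt f (f x • f') x := by
  simpa only [Real.exp_log (hf _)] using hlog.exp

theorem sum_smul_fderiv_log_eq_zero {π : E → A → ℝ} {L : A → StrongDual ℝ E} {θ : E}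
    (hπ_pos : ∀ θ a, 0 < π θ a) (hπ_sum : ∀ θ, ∑ a, π θ a = 1)
    (hL : ∀ a, HasFDerivAt (fun θ => Real.log (π θ a)) (L a) θ) :
    ∑ a, π θ a • L a = 0 := by
  have hsum : HasFDerivAt (fun θ => ∑ a, π θ a) (∑ a, π θ a • L a) θ :=
    HasFDerivAt.fun_sum fun a _ => hasFDerivAt_of_hasFDerivAt_log (hπ_pos · a) (hL a)
  simp only [hπ_sum] at hsum
  exact hsum.unique (hasFDerivAt_const 1 θ)

theorem hasFDerivAt_sum_mul_sub_mul_log_div {π : E → A → ℝ} {L : A → StrongDual ℝ E} {θ : E}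
    (τ : ℝ) (c w : A → ℝ) (hw : ∀ a, w a ≠ 0)
    (hπ_pos : ∀ θ a, 0 < π θ a) (hπ_sum : ∀ θ, ∑ a, π θ a = 1)
    (hL : ∀ a, HasFDerivAt (fun θ => Real.log (π θ a)) (L a) θ) :
    HasFDerivAt (fun θ => ∑ a, π θ a * (c a - τ * Real.log (π θ a / w a)))
      (∑ a, (π θ a * (c a - τ * Real.log (π θ a / w a))) • L a) θ := by
  have hterm : ∀ a, HasFDerivAt (fun θ => π θ a * (c a - τ * Real.log (π θ a / w a)))
      ((π θ a * (c a - τ * Real.log (π θ a / w a))) • L a - τ • π θ a • L a) θ := by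
    intro a
    have hlog_div : HasFDerivAt (fun θ => Real.log (π θ a / w a)) (L a) θ := by
      simp only [Real.log_div (hπ_pos _ a).ne' (hw a)]
      exact (hL a).sub_const _
    refine ((hasFDerivAt_of_hasFDerivAt_log (hπ_pos · a) (hL a)).mul
      ((hlog_div.const_mul τ).const_sub (c a))).congr_fderiv ?_
    simp only [smul_neg, smul_smul]
    module
  refine (HasFDerivAt.fun_sum fun a _ => hterm a).congr_fderiv ?_
  rw [Finset.sum_sub_distrib, ← Finset.smul_sum, sum_smul_fderiv_log_eq_zero hπ_pos hπ_sum hL,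
    smul_zero, sub_zero]

end Regularized

theorem differentiable_softmax {F A : Type*} [NormedAddCommGroup F] [InnerProductSpace ℝ F]
    [Fintype A] [Nonempty A] (τ : ℝ) {w : A → ℝ} (hw : ∀ a, 0 < w a) (ψ : A → F) (a : A) :
    Differentiable ℝ fun θ => w a * Real.exp (⟪θ, ψ a⟫ / τ) / ∑ b, w b * Real.exp (⟪θ, ψ b⟫ / τ) :=
  fun θ => by
    have hZ : 0 < ∑ b, w b * Real.exp (⟪θ, ψ b⟫ / τ) :=
      Finset.sum_pos (fun b _ => mul_pos (hw b) (Real.exp_pos _)) Finset.univ_nonempty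
    have hinner : ∀ b, Differentiable ℝ fun θ : F => ⟪θ, ψ b⟫ := fun b =>
      differentiable_id.inner ℝ (differentiable_const _)
    fun_prop (disch := exact hZ.ne')

section Occupancy

variable {S M : Type*} [Fintype S] [AddCommMonoid M] [Module ℝ M]

theorem sum_smul_sum_smul_comm (ρ : S → ℝ) (K : S → S → ℝ) (g : S → M) :
    ∑ s, ρ s • ∑ s', K s s' • g s' = ∑ s', (∑ s, ρ s * K s s') • g s' := by
  simp only [Finset.smul_sum, Finset.sum_smul, smul_smul]
  exact Finset.sum_comm

theorem sum_forward_smul_backward_eq {n i : ℕ} (ρ : ℕ → S → ℝ) (K : ℕ → S → S → ℝ)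
    (g : ℕ → S → M) (hρ : ∀ k s', ρ (k + 1) s' = ∑ s, ρ k s * K (n - k) s s')
    (hg : ∀ j, i < j → j ≤ n → ∀ s, g j s = ∑ s', K j s s' • g (j - 1) s') :
    ∀ k ≤ n - i, ∑ s, ρ 0 s • g n s = ∑ s, ρ k s • g (n - k) s := by
  intro k hk
  induction k with
  | zero => rfl
  | succ k ih =>
    rw [ih (by omega)]
    simp only [hg (n - k) (by omega) (by omega), sum_smul_sum_smul_comm, ← hρ]
    rfl

end Occupancy

section Values

variable {E S A : Type*} [Fintype S] [Fintype A]
  {τ : ℝ} {pibar : S → A → ℝ} {r : A → S → ℝ} {p : S → A → S → ℝ}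
  {Pol : E → ℕ → S → A → ℝ} {V : E → ℕ → S → ℝ} {Q : E → ℕ → A → S → ℝ}

theorem value_eq_of_policy_eq (hV0 : ∀ θ s, V θ 0 s = 0)
    (hQ : ∀ θ j a s, Q θ (j + 1) a s = r a s + ∑ s', p s a s' * V θ j s')
    (hV : ∀ θ j s, V θ (j + 1) s = ∑ a, Pol θ (j + 1) s a *
      (Q θ (j + 1) a s - τ * Real.log (Pol θ (j + 1) s a / pibar s a)))
    {θ θ' : E} {m : ℕ} (hPol : ∀ j, 1 ≤ j → j ≤ m → Pol θ j = Pol θ' j) :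
    V θ m = V θ' m := by
  induction m with
  | zero => funext s; rw [hV0, hV0]
  | succ m ih =>
    have hVm := ih fun j hj hjm => hPol j hj (by omega)
    funext s
    simp only [hV, hQ, hVm, hPol (m + 1) le_add_self le_rfl]

variable [NormedAddCommGroup E] [NormedSpace ℝ E]

theorem hasFDerivAt_value_succ
    (hQ : ∀ θ j a s, Q θ (j + 1) a s = r a s + ∑ s', p s a s' * V θ j s')
    (hV : ∀ θ j s, V θ (j + 1) s = ∑ a, Pol θ (j + 1) s a *
      (Q θ (j + 1) a s - τ * Real.log (Pol θ (j + 1) s a / pibar s a)))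
    {θ : E} {j : ℕ} (hPol : ∀ θ', Pol θ' (j + 1) = Pol θ (j + 1))
    (hdiff : ∀ s', DifferentiableAt ℝ (fun θ' => V θ' j s') θ) (s : S) :
    HasFDerivAt (fun θ' => V θ' (j + 1) s)
      (∑ s', (∑ a, Pol θ (j + 1) s a * p s a s') • fderiv ℝ (fun θ' => V θ' j s') θ) θ := by
  have hV_affine : (fun θ' => V θ' (j + 1) s) = fun θ' => ∑ a, Pol θ (j + 1) s a *
      (r a s - τ * Real.log (Pol θ (j + 1) s a / pibar s a) + ∑ s', p s a s' * V θ' j s') := by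
    funext θ'
    simp only [hV, hQ, hPol]
    congr! 2
    ring
  rw [hV_affine]
  refine (HasFDerivAt.fun_sum fun a _ => ((HasFDerivAt.fun_sum fun s' _ =>
    ((hdiff s').hasFDerivAt.const_mul (p s a s'))).const_add _).const_mul _).congr_fderiv ?_
  simp only [Finset.smul_sum, Finset.sum_smul, smul_smul]
  exact Finset.sum_comm

theorem fderiv_sum_value_eq_sum_smul_fderiv_value {ρ : ℕ → S → ℝ} {θ : E} {i n : ℕ}
    (hQ : ∀ θ j a s, Q θ (j + 1) a s = r a s + ∑ s', p s a s' * V θ j s')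
    (hV : ∀ θ j s, V θ (j + 1) s = ∑ a, Pol θ (j + 1) s a *
      (Q θ (j + 1) a s - τ * Real.log (Pol θ (j + 1) s a / pibar s a)))
    (hρ0 : ∀ s, ρ 0 s = 1)
    (hρ : ∀ k s', ρ (k + 1) s' = ∑ s, ρ k s * ∑ a, Pol θ (n - k) s a * p s a s')
    (hin : i ≤ n) (hPol : ∀ j, i < j → ∀ θ', Pol θ' j = Pol θ j)
    (hdiff_i : ∀ s, DifferentiableAt ℝ (fun θ' => V θ' i s) θ) :
    fderiv ℝ (fun θ' => ∑ s, V θ' n s) θ = ∑ s, ρ (n - i) s • fderiv ℝ (fun θ' => V θ' i s) θ := by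
  have hdiff : ∀ j, i ≤ j → ∀ s, DifferentiableAt ℝ (fun θ' => V θ' j s) θ := by
    intro j hij
    induction j, hij using Nat.le_induction with
    | base => exact hdiff_i
    | succ j hij ih =>
      exact fun s => (hasFDerivAt_value_succ hQ hV (hPol _ (by omega)) ih s).differentiableAt
  have hV_succ : ∀ j, i < j → j ≤ n → ∀ s, fderiv ℝ (fun θ' => V θ' j s) θ =
      ∑ s', (∑ a, Pol θ j s a * p s a s') • fderiv ℝ (fun θ' => V θ' (j - 1) s') θ := by
    intro j hij _ s
    obtain ⟨j, rfl⟩ : ∃ k, j = k + 1 := ⟨j - 1, by omega⟩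
    exact (hasFDerivAt_value_succ hQ hV (hPol _ hij) (hdiff j (by omega)) s).fderiv
  have hpair := sum_forward_smul_backward_eq ρ _ _ hρ hV_succ (n - i) le_rfl
  rw [Nat.sub_sub_self hin] at hpair
  rw [fderiv_fun_sum fun s _ => hdiff n hin s, ← hpair]
  simp only [hρ0, one_smul]

end Values

theorem matryoshka_policy_gradient_theorem_general
    {S A : Type*} [Fintype S] [Fintype A] [Nonempty A]
    (τ : ℝ)
    (pibar : S → A → ℝ) (hpibar_pos : ∀ s a, 0 < pibar s a)
    (r : A → S → ℝ)
    (p : S → A → S → ℝ)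
    (n : ℕ) (i : ℕ) (hi : 1 ≤ i) (hin : i ≤ n)
    (P : ℕ) (ψ : A → S → EuclideanSpace ℝ (Fin P))
    -- the extended policy, as a function of the parameter `θ^{(i)}` of its
    -- `i`-step component; the other components do not depend on `θ^{(i)}`
    (Pol : EuclideanSpace ℝ (Fin P) → ℕ → S → A → ℝ)
    (hPoli : ∀ θ s a, Pol θ i s a =
      pibar s a * Real.exp (⟪θ, ψ a s⟫ / τ) /
        ∑ a', pibar s a' * Real.exp (⟪θ, ψ a' s⟫ / τ))
    (hPolfix : ∀ θ θ' j, j ≠ i → Pol θ j = Pol θ' j)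
    (hPol_pos : ∀ θ j s a, 0 < Pol θ j s a) (hPol_sum : ∀ θ j s, ∑ a, Pol θ j s a = 1)
    -- value and Q functions of the extended policy, defined recursively
    (V : EuclideanSpace ℝ (Fin P) → ℕ → S → ℝ)
    (Q : EuclideanSpace ℝ (Fin P) → ℕ → A → S → ℝ)
    (hV0 : ∀ θ s, V θ 0 s = 0)
    (hQ : ∀ θ j a s, Q θ (j + 1) a s = r a s + ∑ s', p s a s' * V θ j s')
    (hV : ∀ θ j s, V θ (j + 1) s = ∑ a, Pol θ (j + 1) s a *
      (Q θ (j + 1) a s - τ * Real.log (Pol θ (j + 1) s a / pibar s a)))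
    -- occupancy weights (uniform unnormalized initial distribution)
    (ρ : EuclideanSpace ℝ (Fin P) → ℕ → S → ℝ)
    (hρ0 : ∀ θ s, ρ θ 0 s = 1)
    (hρ : ∀ θ k s', ρ θ (k + 1) s' =
      ∑ s, ρ θ k s * ∑ a, Pol θ (n - k) s a * p s a s')
    (θ : EuclideanSpace ℝ (Fin P)) :
    gradient (fun θ' => ∑ s, V θ' n s) θ
        = ∑ s, ρ θ (n - i) s • gradient (fun θ' => V θ' i s) θ ∧
      gradient (fun θ' => ∑ s, V θ' n s) θ
        = ∑ s, ρ θ (n - i) s •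
            ∑ a, (Pol θ i s a * (Q θ i a s - τ * Real.log (Pol θ i s a / pibar s a))) •
              gradient (fun θ' => Real.log (Pol θ' i s a)) θ := by
  have hL : ∀ s a, DifferentiableAt ℝ (fun θ' => Real.log (Pol θ' i s a)) θ := fun s a => by
    simp only [hPoli]
    exact (differentiable_softmax τ (hpibar_pos s) (ψ · s) a θ).log
      (hPoli θ s a ▸ hPol_pos θ i s a).ne'
  have hVi_eq : ∀ θ' s, V θ' i s =
      ∑ a, Pol θ' i s a * (Q θ i a s - τ * Real.log (Pol θ' i s a / pibar s a)) := by
    intro θ' s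
    obtain ⟨i₀, rfl⟩ : ∃ i₀, i = i₀ + 1 := ⟨i - 1, by omega⟩
    have hVi₀ : V θ' i₀ = V θ i₀ :=
      value_eq_of_policy_eq hV0 hQ hV fun j _ hj => hPolfix θ' θ j (by omega)
    simp only [hV, hQ, hVi₀]
  have hVi : ∀ s, HasFDerivAt (fun θ' => V θ' i s) (∑ a, (Pol θ i s a *
      (Q θ i a s - τ * Real.log (Pol θ i s a / pibar s a))) •
        fderiv ℝ (fun θ' => Real.log (Pol θ' i s a)) θ) θ := fun s => by
    simp only [hVi_eq]
    exact hasFDerivAt_sum_mul_sub_mul_log_div τ _ _ (fun a => (hpibar_pos s a).ne')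
      (fun θ' => hPol_pos θ' i s) (fun θ' => hPol_sum θ' i s) fun a => (hL s a).hasFDerivAt
  have htotal := fderiv_sum_value_eq_sum_smul_fderiv_value hQ hV (hρ0 θ) (hρ θ) hin
    (fun j hj θ' => hPolfix θ' θ j hj.ne') fun s => (hVi s).differentiableAt
  -- `gradient` is `fderiv` carried across the linear Riesz isomorphism `toDual`
  refine ⟨?_, ?_⟩ <;> simp only [gradient, htotal, fun s => (hVi s).fderiv, map_sum, map_smul]

/-- Matryoshka Policy Gradient theorem (ideal update, finite state
space): for an extended policy whose `i`-step component is the softmax of linear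
preferences with parameter `θ^{(i)}` and whose other components do not depend on
`θ^{(i)}`,
`∇_{θ^{(i)}} J_n(π_θ) = Σ_s ρ^{(n−i)}(s) ∇_{θ^{(i)}} V^{(i)}_{π_θ}(s)
 = Σ_s ρ^{(n−i)}(s) Σ_a π^{(i)}(a|s) (Q^{(i)}(a,s) − τ log(π^{(i)}(a|s)/π̄(a|s)))
 ∇_{θ^{(i)}} log π^{(i)}(a|s)`,
where `ρ^{(k)}` is the occupancy weight after `k` steps. -/
theorem matryoshka_policy_gradient_theorem
    {S A : Type*} [Fintype S] [Fintype A] [Nonempty S] [Nonempty A]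
    (τ : ℝ) (hτ : 0 < τ)
    (pibar : S → A → ℝ) (hpibar_pos : ∀ s a, 0 < pibar s a)
    (hpibar_sum : ∀ s, ∑ a, pibar s a = 1)
    (r : A → S → ℝ)
    (p : S → A → S → ℝ) (hp_nonneg : ∀ s a s', 0 ≤ p s a s')
    (hp_sum : ∀ s a, ∑ s', p s a s' = 1)
    (n : ℕ) (i : ℕ) (hi : 1 ≤ i) (hin : i ≤ n)
    (P : ℕ) (ψ : A → S → EuclideanSpace ℝ (Fin P))
    -- the extended policy, as a function of the parameter `θ^{(i)}` of its
    -- `i`-step component; the other components do not depend on `θ^{(i)}`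
    (Pol : EuclideanSpace ℝ (Fin P) → ℕ → S → A → ℝ)
    (hPoli : ∀ θ s a, Pol θ i s a =
      pibar s a * Real.exp (⟪θ, ψ a s⟫ / τ) /
        ∑ a', pibar s a' * Real.exp (⟪θ, ψ a' s⟫ / τ))
    (hPolfix : ∀ θ θ' j, j ≠ i → Pol θ j = Pol θ' j)
    (hPol_pos : ∀ θ j s a, 0 < Pol θ j s a) (hPol_sum : ∀ θ j s, ∑ a, Pol θ j s a = 1)
    -- value and Q functions of the extended policy, defined recursively
    (V : EuclideanSpace ℝ (Fin P) → ℕ → S → ℝ)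
    (Q : EuclideanSpace ℝ (Fin P) → ℕ → A → S → ℝ)
    (hV0 : ∀ θ s, V θ 0 s = 0)
    (hQ : ∀ θ j a s, Q θ (j + 1) a s = r a s + ∑ s', p s a s' * V θ j s')
    (hV : ∀ θ j s, V θ (j + 1) s = ∑ a, Pol θ (j + 1) s a *
      (Q θ (j + 1) a s - τ * Real.log (Pol θ (j + 1) s a / pibar s a)))
    -- occupancy weights (uniform unnormalized initial distribution)
    (ρ : EuclideanSpace ℝ (Fin P) → ℕ → S → ℝ)
    (hρ0 : ∀ θ s, ρ θ 0 s = 1)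
    (hρ : ∀ θ k s', ρ θ (k + 1) s' =
      ∑ s, ρ θ k s * ∑ a, Pol θ (n - k) s a * p s a s')
    (θ : EuclideanSpace ℝ (Fin P)) :
    gradient (fun θ' => ∑ s, V θ' n s) θ
        = ∑ s, ρ θ (n - i) s • gradient (fun θ' => V θ' i s) θ ∧
      gradient (fun θ' => ∑ s, V θ' n s) θ
        = ∑ s, ρ θ (n - i) s •
            ∑ a, (Pol θ i s a * (Q θ i a s - τ * Real.log (Pol θ i s a / pibar s a))) •
              gradient (fun θ' => Real.log (Pol θ' i s a)) θ :=
  matryoshka_policy_gradient_theorem_general τ pibar hpibar_pos r p n i hi hin P ψ Pol hPoli hPolfix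
    hPol_pos hPol_sum V Q hV0 hQ hV ρ hρ0 hρ θ
end
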